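/- arXiv:math/9606209 — 2 statements merged into one kernel-verified Lean document; each statement's English description precedes it below -/
import Mathlib

section
/- Let T be a nonempty countable well-founded tree with o(T) = α for a countable ordinal α, let M be the set of maximal elements of T, let M = M₁ ∪ … ∪ Mₙ be a partition of M into finitely many pieces, and for each i let T_i = {x ∈ T : x ≤ m for some m ∈ M_i}. Then o(T_i) = α for some 1 ≤ i ≤ n. -/
universe u v

open Ordinal

/- ## General machinery for trees (as partially ordered sets / sets with a relation) -/

section Trees

variable {σ : Type*} {τ : Type*}

/-- The derived tree `D(T) = {x ∈ T : x < y for some y ∈ T}` (with respect to a strict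
relation `lt`): `T` with all its terminal nodes removed. -/
def derivSet (lt : σ → σ → Prop) (T : Set σ) : Set σ :=
  {x ∈ T | ∃ y ∈ T, lt x y}

/-- The transfinite iterates of the derivative: `T⁰ = T`, `T^(γ+1) = D(T^γ)`, and
`T^λ = ⋂_{γ<λ} T^γ` for limit `λ`. -/
noncomputable def derivIter (lt : σ → σ → Prop) (T : Set σ) (o : Ordinal.{0}) : Set σ :=
  Ordinal.limitRecOn (motive := fun _ => Set σ) o T (fun _ S => derivSet lt S)
    (fun o _ ih => ⋂ (o' : Ordinal.{0}) (h : o' < o), ih o' h)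

/-- A tree is well-founded if it contains no infinite linearly ordered subset. -/
def TreeWF (lt : σ → σ → Prop) (T : Set σ) : Prop :=
  ¬∃ S : Set σ, S ⊆ T ∧ S.Infinite ∧ ∀ x ∈ S, ∀ y ∈ S, x ≠ y → lt x y ∨ lt y x

/-- The order `o(T)` of a (well-founded) tree: the least `γ` with `T^γ = ∅`. -/
noncomputable def treeOrder (lt : σ → σ → Prop) (T : Set σ) : Ordinal.{0} :=
  sInf {o : Ordinal.{0} | derivIter lt T o = ∅}

/-- A tree isomorphism from `S` (ordered by `leS`) onto `T` (ordered by `leT`):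
a bijection of `S` onto `T` preserving order in both directions. -/
def TreeIso (leS : σ → σ → Prop) (leT : τ → τ → Prop) (S : Set σ) (T : Set τ) : Prop :=
  ∃ f : σ → τ, (∀ x ∈ S, f x ∈ T) ∧ (∀ y ∈ T, ∃ x ∈ S, f x = y) ∧
    Set.InjOn f S ∧ ∀ x ∈ S, ∀ y ∈ S, (leS x y ↔ leT (f x) (f y))

/-- The strict relation associated to a partial order relation `le`. -/
def strictOf (le : σ → σ → Prop) : σ → σ → Prop := fun a b => le a b ∧ a ≠ b

/-- A tree (in the abstract sense) inside a partially ordered set: a countable nonempty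
set such that, for each `x ∈ T`, `{y ∈ T : y < x}` is finite and linearly ordered. -/
def IsAbsTree (le : σ → σ → Prop) (T : Set σ) : Prop :=
  T.Nonempty ∧ T.Countable ∧
    ∀ x ∈ T, {y ∈ T | strictOf le y x}.Finite ∧
      ∀ y ∈ T, strictOf le y x → ∀ z ∈ T, strictOf le z x → le y z ∨ le z y

end Trees

/- ## Trees on a set `X`: subsets of the nonempty finite sequences from `X`,
ordered by end-extension (list prefix order). -/

section TreesOn

variable {X : Type*}

/-- The strict prefix (end-extension) order on finite sequences. -/
def listLt : List X → List X → Prop := fun x y => x <+: y ∧ x ≠ y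

/-- A tree on a set `X`: a countable nonempty collection of nonempty finite sequences
from `X` (ordered by end-extension). -/
def IsTreeOn (T : Set (List X)) : Prop :=
  T.Nonempty ∧ T.Countable ∧ ∀ l ∈ T, l ≠ []

end TreesOn

/- ## ℓ₁ / ℓ∞ / ℓ_p nodes and trees on a Banach space -/

section Banach

variable {X : Type*} [NormedAddCommGroup X] [NormedSpace ℝ X]

/-- `(x_i)₁^m` is a finite sequence of norm-one vectors `K`-equivalent to the unit vector
basis of `ℓ₁^m`. -/
def IsL1Node (K : ℝ) (l : List X) : Prop :=
  (∀ x ∈ l, ‖x‖ = 1) ∧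
  ∃ c C : ℝ, 0 < c ∧ 0 < C ∧ C / c ≤ K ∧
    ∀ a : Fin l.length → ℝ,
      c * (∑ i, |a i|) ≤ ‖∑ i, a i • l.get i‖ ∧
        ‖∑ i, a i • l.get i‖ ≤ C * (∑ i, |a i|)

/-- `(x_i)₁^m` is a finite sequence of norm-one vectors `K`-equivalent to the unit vector
basis of `ℓ∞^m`. -/
def IsLinfNode (K : ℝ) (l : List X) : Prop :=
  (∀ x ∈ l, ‖x‖ = 1) ∧
  ∃ c C : ℝ, 0 < c ∧ 0 < C ∧ C / c ≤ K ∧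
    ∀ a : Fin l.length → ℝ,
      c * (⨆ i, |a i|) ≤ ‖∑ i, a i • l.get i‖ ∧
        ‖∑ i, a i • l.get i‖ ≤ C * (⨆ i, |a i|)

/-- `(x_i)₁^m` is a finite sequence of norm-one vectors `K`-equivalent to the unit vector
basis of `ℓ_p^m`. -/
noncomputable def IsLpNode (p K : ℝ) (l : List X) : Prop :=
  (∀ x ∈ l, ‖x‖ = 1) ∧
  ∃ c C : ℝ, 0 < c ∧ 0 < C ∧ C / c ≤ K ∧
    ∀ a : Fin l.length → ℝ,
      c * ((∑ i, |a i| ^ p) ^ (1 / p)) ≤ ‖∑ i, a i • l.get i‖ ∧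
        ‖∑ i, a i • l.get i‖ ≤ C * ((∑ i, |a i| ^ p) ^ (1 / p))

/-- An ℓ₁-`K`-tree on `X`. -/
def IsL1KTree (K : ℝ) (T : Set (List X)) : Prop :=
  IsTreeOn T ∧ ∀ l ∈ T, IsL1Node K l

/-- An ℓ∞-`K`-tree on `X`. -/
def IsLinfKTree (K : ℝ) (T : Set (List X)) : Prop :=
  IsTreeOn T ∧ ∀ l ∈ T, IsLinfNode K l

/-- An ℓ_p-`K`-tree on `X`. -/
def IsLpKTree (p K : ℝ) (T : Set (List X)) : Prop :=
  IsTreeOn T ∧ ∀ l ∈ T, IsLpNode p K l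

/-- `ys` is a normalized block basis of the finite sequence `zs`:
`y_j = ∑_{i ∈ E_j} a_i z_i` with `‖y_j‖ = 1` and `E₁ < E₂ < …` successive subsets. -/
def IsNormBlockOf (ys zs : List X) : Prop :=
  ∃ (E : Fin ys.length → Finset (Fin zs.length)) (a : Fin zs.length → ℝ),
    (∀ j, (E j).Nonempty) ∧
    (∀ j₁ j₂ : Fin ys.length, j₁ < j₂ → ∀ i₁ ∈ E j₁, ∀ i₂ ∈ E j₂, i₁ < i₂) ∧
    ∀ j, ys.get j = ∑ i ∈ E j, a i • zs.get i ∧ ‖ys.get j‖ = 1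

/-- `p` is the initial node of the subtree `T'` lying below `x`. -/
def IsInitialBelow (T' : Set (List X)) (p x : List X) : Prop :=
  p ∈ T' ∧ p <+: x ∧ ∀ q ∈ T', q <+: x → p <+: q

/-- `k` is the length of the predecessor node of `p` in `T` (`k = 0` when `p` is an
initial node of `T`). -/
def PredLenIn (T : Set (List X)) (p : List X) (k : ℕ) : Prop :=
  (k = 0 ∧ ∀ z ∈ T, z <+: p → z = p) ∨
  (∃ z ∈ T, z <+: p ∧ z ≠ p ∧ z.length = k ∧ ∀ w ∈ T, w <+: p → w ≠ p → w <+: z)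

/-- `S` is a block subtree of `T` (written `S ⪯ T`): there are a subtree `T' ⊆ T` and a
tree isomorphism `f : T' → S` such that each `f(x)` is built from normalized block bases
as in the definition of Judd–Odell. -/
def IsBlockSubtree (S T : Set (List X)) : Prop :=
  ∃ (T' : Set (List X)) (f : List X → List X),
    T' ⊆ T ∧
    (∀ x ∈ T', f x ∈ S) ∧
    (∀ y ∈ S, ∃ x ∈ T', f x = y) ∧
    (∀ x ∈ T', ∀ y ∈ T', (x <+: y ↔ f x <+: f y)) ∧
    (∀ x ∈ T', ∀ p, IsInitialBelow T' p x → ∀ k, PredLenIn T p k →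
      IsNormBlockOf (f x) (x.drop k)) ∧
    (∀ x ∈ T', ∀ x' ∈ T', listLt x' x → (∀ w ∈ T', listLt w x → w <+: x') →
      ∃ b : List X, IsNormBlockOf b (x.drop x'.length) ∧ f x = f x' ++ b)

/- ## Schauder bases, block basis trees and the ℓ₁-indices -/

/-- `e` is a Schauder basis of `X`: every `x ∈ X` has a unique representation
`x = ∑ a_i e_i` (convergence of the partial sums in norm). -/
def IsSchauderBasis (e : ℕ → X) : Prop :=
  ∀ x : X, ∃! a : ℕ → ℝ,
    Filter.Tendsto (fun n => ∑ i ∈ Finset.range n, a i • e i) Filter.atTop (nhds x)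

/-- A node which is a finite normalized block basis of `(e_i)`:
norm-one vectors with consecutive finite supports. -/
def IsBlockNode (e : ℕ → X) (l : List X) : Prop :=
  l ≠ [] ∧ ∃ (E : Fin l.length → Finset ℕ) (a : ℕ → ℝ),
    (∀ j, (E j).Nonempty) ∧
    (∀ j₁ j₂ : Fin l.length, j₁ < j₂ → ∀ i₁ ∈ E j₁, ∀ i₂ ∈ E j₂, i₁ < i₂) ∧
    ∀ j, l.get j = ∑ i ∈ E j, a i • e i ∧ ‖l.get j‖ = 1

/-- A node which is a finite normalized block basis of `(e_i)_{i>n}`. -/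
def IsBlockNodeFrom (e : ℕ → X) (n : ℕ) (l : List X) : Prop :=
  l ≠ [] ∧ ∃ (E : Fin l.length → Finset ℕ) (a : ℕ → ℝ),
    (∀ j, (E j).Nonempty) ∧
    (∀ j, ∀ i ∈ E j, n < i) ∧
    (∀ j₁ j₂ : Fin l.length, j₁ < j₂ → ∀ i₁ ∈ E j₁, ∀ i₂ ∈ E j₂, i₁ < i₂) ∧
    ∀ j, l.get j = ∑ i ∈ E j, a i • e i ∧ ‖l.get j‖ = 1

/-- An ℓ₁-`K`-block basis tree on `X` with respect to `(e_i)`. -/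
def IsL1KBlockTree (e : ℕ → X) (K : ℝ) (T : Set (List X)) : Prop :=
  IsL1KTree K T ∧ ∀ l ∈ T, IsBlockNode e l

/-- An ℓ₁-`K`-block basis tree on `X` with respect to `(e_i)_{i>n}`. -/
def IsL1KBlockTreeFrom (e : ℕ → X) (n : ℕ) (K : ℝ) (T : Set (List X)) : Prop :=
  IsL1KTree K T ∧ ∀ l ∈ T, IsBlockNodeFrom e n l

/-- `I_b(X, K)`: the supremum of the orders of ℓ₁-`K`-block basis trees on `X`. -/
noncomputable def blockIndexK (e : ℕ → X) (K : ℝ) : Ordinal.{0} :=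
  sSup {o : Ordinal.{0} | ∃ T : Set (List X),
    IsL1KBlockTree e K T ∧ TreeWF listLt T ∧ treeOrder listLt T = o}

/-- `I_b(X)`: the block basis ℓ₁-index of `X` with respect to `(e_i)`. -/
noncomputable def blockIndex (e : ℕ → X) : Ordinal.{0} :=
  sSup {o : Ordinal.{0} | ∃ K : ℝ, 1 ≤ K ∧ o = blockIndexK e K}

/-- `I_b(X_n, K)`: the index over trees of blocks of `(e_i)_{i>n}`, i.e. the block basis
index of the closed span `X_n` of `(e_i)_{i>n}` with respect to the basis `(e_i)_{i>n}`. -/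
noncomputable def blockIndexKFrom (e : ℕ → X) (n : ℕ) (K : ℝ) : Ordinal.{0} :=
  sSup {o : Ordinal.{0} | ∃ T : Set (List X),
    IsL1KBlockTreeFrom e n K T ∧ TreeWF listLt T ∧ treeOrder listLt T = o}

end Banach

/-- `I(X, K)`: the supremum of the orders of ℓ₁-`K`-trees on `X`. -/
noncomputable def l1IndexK (X : Type*) [NormedAddCommGroup X] [NormedSpace ℝ X]
    (K : ℝ) : Ordinal.{0} :=
  sSup {o : Ordinal.{0} | ∃ T : Set (List X),
    IsL1KTree K T ∧ TreeWF listLt T ∧ treeOrder listLt T = o}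

/-- `I(X)`: the Bourgain ℓ₁-index of `X`. -/
noncomputable def l1Index (X : Type*) [NormedAddCommGroup X] [NormedSpace ℝ X] :
    Ordinal.{0} :=
  sSup {o : Ordinal.{0} | ∃ K : ℝ, 1 ≤ K ∧ o = l1IndexK X K}

/-- `X` contains a sequence of norm-one vectors equivalent to the unit vector basis of
`ℓ₁`, i.e. `X` contains a subspace isomorphic to `ℓ₁`. -/
def ContainsL1 (X : Type*) [NormedAddCommGroup X] [NormedSpace ℝ X] : Prop :=
  ∃ x : ℕ → X, (∀ n, ‖x n‖ = 1) ∧ ∃ c : ℝ, 0 < c ∧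
    ∀ (n : ℕ) (a : Fin n → ℝ), c * (∑ i, |a i|) ≤ ‖∑ i, a i • x i.1‖
/- ## Schreier families and ℓ₁-spreading models -/

/-- `F ∈ S₁`: the Schreier family, `|F| ≤ min F` (the empty set belongs vacuously). -/
def InS1 (F : Finset ℕ) : Prop := ∀ m ∈ F, F.card ≤ m

/-- `F ∈ S₂ = S₁[S₁]`: `F = F₁ ∪ … ∪ F_k` with each `F_i ∈ S₁`, `F₁ < … < F_k`, and
`{m₁ < … < m_k} ∈ S₁` with `m₁ ≤ F₁ < m₂ ≤ F₂ < … < m_k ≤ F_k`. -/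
def InS2 (F : Finset ℕ) : Prop :=
  F = ∅ ∨ ∃ (k : ℕ) (_ : 0 < k) (G : Fin k → Finset ℕ) (m : Fin k → ℕ),
    (∀ i, InS1 (G i)) ∧
    (∀ i j : Fin k, i < j → ∀ a ∈ G i, ∀ b ∈ G j, a < b) ∧
    StrictMono m ∧
    InS1 (Finset.image m Finset.univ) ∧
    (∀ i, ∀ a ∈ G i, m i ≤ a) ∧
    (∀ i j : Fin k, i < j → ∀ a ∈ G i, a < m j) ∧
    F = Finset.univ.biUnion G

section SM

variable {X : Type*} [NormedAddCommGroup X] [NormedSpace ℝ X]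

/-- `(x_i)_{i ∈ F}` is `K`-equivalent to the unit vector basis of `ℓ₁^{|F|}`. -/
def L1EquivOn (K : ℝ) (x : ℕ → X) (F : Finset ℕ) : Prop :=
  ∃ c C : ℝ, 0 < c ∧ 0 < C ∧ C / c ≤ K ∧
    ∀ a : ℕ → ℝ,
      c * (∑ i ∈ F, |a i|) ≤ ‖∑ i ∈ F, a i • x i‖ ∧
        ‖∑ i ∈ F, a i • x i‖ ≤ C * (∑ i ∈ F, |a i|)

/-- A normalized basic sequence: norm-one vectors forming a Schauder basis of their
closed linear span (characterized by the uniform boundedness of the projections). -/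
def IsNormalizedBasic (x : ℕ → X) : Prop :=
  (∀ n, ‖x n‖ = 1) ∧ ∃ C : ℝ, 1 ≤ C ∧ ∀ m n : ℕ, m ≤ n → ∀ a : ℕ → ℝ,
    ‖∑ i ∈ Finset.range m, a i • x i‖ ≤ C * ‖∑ i ∈ Finset.range n, a i • x i‖

/- ## Helpers for Tsirelson's space -/

/-- The vector `∑ a_i e_i` of `X` associated to a finitely supported family of reals. -/
noncomputable def finsuppVec (e : ℕ → X) (a : ℕ →₀ ℝ) : X := a.sum fun i c => c • e i

end SM

/-- The restriction `Ea` of a finitely supported family to a finite set of coordinates. -/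
noncomputable def restrictTo (E : Finset ℕ) (a : ℕ →₀ ℝ) : ℕ →₀ ℝ :=
  ∑ i ∈ E, Finsupp.single i (a i)

/-- `(E_i)₁ⁿ` is `S₁`-admissible: `E₁ < … < E_n` nonempty finite sets with
`(min E_i)₁ⁿ ∈ S₁`, i.e. `n ≤ min E₁`. -/
def S1Admissible {n : ℕ} (E : Fin n → Finset ℕ) : Prop :=
  0 < n ∧ (∀ i, (E i).Nonempty) ∧
    (∀ i j : Fin n, i < j → ∀ a ∈ E i, ∀ b ∈ E j, a < b) ∧
    (∀ i : Fin n, ∀ a ∈ E i, n ≤ a)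
section MNPAux
variable {σ : Type v} {lt : σ → σ → Prop}

lemma MNP.derivIter_zero (T : Set σ) : derivIter lt T 0 = T := Ordinal.limitRecOn_zero (motive := fun _ => Set σ) _ _ _

lemma MNP.derivIter_succ (T : Set σ) (o : Ordinal) :
    derivIter lt T (Order.succ o) = derivSet lt (derivIter lt T o) :=
  Ordinal.limitRecOn_succ (motive := fun _ => Set σ) _ _ _ _

lemma MNP.derivIter_limit (T : Set σ) {o : Ordinal} (ho : Order.IsSuccLimit o) :
    derivIter lt T o = ⋂ (o' : Ordinal) (_ : o' < o), derivIter lt T o' :=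
  Ordinal.limitRecOn_limit (motive := fun _ => Set σ) _ _ _ _ ho

lemma MNP.derivSet_subset (T : Set σ) : derivSet lt T ⊆ T := fun _ hx => hx.1

lemma MNP.derivSet_mono {S S' : Set σ} (h : S ⊆ S') : derivSet lt S ⊆ derivSet lt S' := by
  rintro x ⟨hx, y, hy, hxy⟩; exact ⟨h hx, y, h hy, hxy⟩

lemma MNP.derivIter_mono {S S' : Set σ} (h : S ⊆ S') (o : Ordinal) :
    derivIter lt S o ⊆ derivIter lt S' o := by
  induction o using Ordinal.induction with
  | _ o IH =>
    rcases Ordinal.zero_or_succ_or_isSuccLimit o with rfl | ⟨a, rfl⟩ | hlim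
    · rw [MNP.derivIter_zero, MNP.derivIter_zero]; exact h
    · rw [MNP.derivIter_succ, MNP.derivIter_succ]
      exact MNP.derivSet_mono (IH a (Order.lt_succ a))
    · rw [MNP.derivIter_limit _ hlim, MNP.derivIter_limit _ hlim]
      exact fun x hx => Set.mem_iInter₂.2 fun o' ho' =>
        IH o' ho' (Set.mem_iInter₂.1 hx o' ho')

lemma MNP.derivIter_anti (T : Set σ) : ∀ δ γ : Ordinal, γ ≤ δ →
    derivIter lt T δ ⊆ derivIter lt T γ := by
  intro δ
  induction δ using Ordinal.induction with
  | _ δ IH =>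
    intro γ hγ
    rcases eq_or_lt_of_le hγ with rfl | hlt
    · exact subset_rfl
    rcases Ordinal.zero_or_succ_or_isSuccLimit δ with rfl | ⟨a, rfl⟩ | hlim
    · exact absurd hlt (not_lt_of_ge (bot_le (a := γ)))
    · rw [MNP.derivIter_succ]
      exact (MNP.derivSet_subset _).trans (IH a (Order.lt_succ a) γ (Order.lt_succ_iff.1 hlt))
    · rw [MNP.derivIter_limit _ hlim]
      exact fun x hx => Set.mem_iInter₂.1 hx γ hlt

end MNPAux


/-- **Lemma (maximal nodes).** Let `T` be a countable well-founded tree of order `α`, let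
`M` be its set of maximal nodes, partitioned as `M = M₁ ∪ … ∪ Mₙ`, and let
`T_i = {x ∈ T : x ≤ m for some m ∈ M_i}`. Then `o(T_i) = α` for some `i`. -/
theorem maximal_nodes_partition (σ : Type u) (le : σ → σ → Prop)
    (hpo : IsPartialOrder σ le) (T : Set σ) (hT : IsAbsTree le T)
    (hwf : TreeWF (strictOf le) T) (α : Ordinal.{0})
    (hα : α.card ≤ Cardinal.aleph0) (ho : treeOrder (strictOf le) T = α)
    (n : ℕ) (hn : 1 ≤ n) (M : Fin n → Set σ)
    (hcover : {x ∈ T | ∀ y ∈ T, le x y → y = x} = ⋃ i, M i)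
    (hdisj : ∀ i j : Fin n, i ≠ j → Disjoint (M i) (M j)) :
    ∃ i : Fin n, treeOrder (strictOf le) {x ∈ T | ∃ m ∈ M i, le x m} = α := by
  classical
  have : Nonempty (Fin n) := ⟨⟨0, hn⟩⟩
  set lt' := strictOf le with hlt'
  have hrefl : ∀ a, le a a := fun a => hpo.refl a
  have htrans : ∀ {a b c}, le a b → le b c → le a c := fun h1 h2 => hpo.trans _ _ _ h1 h2
  have hanti : ∀ {a b}, le a b → le b a → a = b := fun h1 h2 => hpo.antisymm _ _ h1 h2
  set Ti : Fin n → Set σ := fun i => {x ∈ T | ∃ m ∈ M i, le x m} with hTi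
  -- every element of T lies below a maximal element
  have hmax : ∀ x ∈ T, ∃ m ∈ T, le x m ∧ ∀ y ∈ T, le m y → y = m := by
    intro x hx
    by_contra hcon
    push_neg at hcon
    have key : ∀ z : {z : σ // z ∈ T ∧ le x z}, ∃ w : {z : σ // z ∈ T ∧ le x z},
        lt' z.1 w.1 := by
      rintro ⟨z, hzT, hxz⟩
      obtain ⟨y, hyT, hzy, hne⟩ := hcon z hzT hxz
      exact ⟨⟨y, hyT, htrans hxz hzy⟩, hzy, fun h => hne h.symm⟩
    choose g hg using key
    let f : ℕ → {z : σ // z ∈ T ∧ le x z} := fun n => Nat.rec ⟨x, hx, hrefl x⟩ (fun _ z => g z) n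
    have hlt_trans : ∀ {a b c}, lt' a b → lt' b c → lt' a c := by
      rintro a b c ⟨h1, hne1⟩ ⟨h2, hne2⟩
      refine ⟨htrans h1 h2, fun h => hne1 ?_⟩
      subst h
      exact hanti h1 h2
    have hstep : ∀ k, lt' (f k).1 (f (k + 1)).1 := fun k => hg (f k)
    have hchain : ∀ i j : ℕ, i < j → lt' (f i).1 (f j).1 := by
      intro i j hij
      induction j with
      | zero => omega
      | succ j IH =>
        rcases Nat.lt_succ_iff_lt_or_eq.1 hij with h | rfl
        · exact hlt_trans (IH h) (hstep j)
        · exact hstep i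
    have hinj : Function.Injective fun k => (f k).1 := by
      intro i j hij
      by_contra hne
      rcases Nat.lt_or_ge i j with h | h
      · exact (hchain i j h).2 hij
      · exact (hchain j i (by omega)).2 hij.symm
    exact hwf ⟨Set.range fun k => (f k).1,
      by rintro _ ⟨k, rfl⟩; exact (f k).2.1,
      Set.infinite_range_of_injective hinj,
      by
        rintro _ ⟨i, rfl⟩ _ ⟨j, rfl⟩ hne
        rcases Nat.lt_or_ge i j with h | h
        · exact Or.inl (hchain i j h)
        · have : j < i := by
            rcases Nat.eq_or_lt_of_le h with rfl | h'
            · exact absurd rfl hne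
            · exact h'
          exact Or.inr (hchain j i this)⟩
  have hTisub : ∀ i, Ti i ⊆ T := fun i x hx => hx.1
  have hTcover : T ⊆ ⋃ i, Ti i := by
    intro x hx
    obtain ⟨m, hmT, hxm, hmmax⟩ := hmax x hx
    have hm : m ∈ ⋃ i, M i := by
      rw [← hcover]; exact ⟨hmT, hmmax⟩
    obtain ⟨i, hi⟩ := Set.mem_iUnion.1 hm
    exact Set.mem_iUnion.2 ⟨i, hx, m, hi, hxm⟩
  -- downward closedness at every level
  have hQ : ∀ i : Fin n, ∀ γ : Ordinal, ∀ x ∈ derivIter lt' T γ,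
      ∀ y ∈ derivIter lt' (Ti i) γ, lt' x y → x ∈ derivIter lt' (Ti i) γ := by
    intro i γ
    induction γ using Ordinal.induction with
    | _ γ IH =>
      intro x hx y hy hxy
      rcases Ordinal.zero_or_succ_or_isSuccLimit γ with rfl | ⟨a, rfl⟩ | hlim
      · rw [MNP.derivIter_zero] at hx hy ⊢
        obtain ⟨hyT, m, hmi, hym⟩ := hy
        exact ⟨hx, m, hmi, htrans hxy.1 hym⟩
      · rw [MNP.derivIter_succ] at hx hy ⊢
        have hy' : y ∈ derivIter lt' (Ti i) a := hy.1
        have hx' : x ∈ derivIter lt' (Ti i) a :=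
          IH a (Order.lt_succ a) x hx.1 y hy' hxy
        exact ⟨hx', y, hy', hxy⟩
      · rw [MNP.derivIter_limit _ hlim] at hx hy ⊢
        refine Set.mem_iInter₂.2 fun o' ho' => ?_
        exact IH o' ho' x (Set.mem_iInter₂.1 hx o' ho') y (Set.mem_iInter₂.1 hy o' ho') hxy
  -- the key identity
  have hP : ∀ γ : Ordinal, derivIter lt' T γ = ⋃ i, derivIter lt' (Ti i) γ := by
    intro γ
    induction γ using Ordinal.induction with
    | _ γ IH =>
      refine Set.Subset.antisymm ?_ ?_
      swap
      · exact Set.iUnion_subset fun i => MNP.derivIter_mono (hTisub i) γ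
      rcases Ordinal.zero_or_succ_or_isSuccLimit γ with rfl | ⟨a, rfl⟩ | hlim
      · rw [MNP.derivIter_zero]
        intro x hx
        obtain ⟨i, hxi⟩ := Set.mem_iUnion.1 (hTcover hx)
        exact Set.mem_iUnion.2 ⟨i, by rw [MNP.derivIter_zero]; exact hxi⟩
      · rw [MNP.derivIter_succ]
        rintro x ⟨hx, y, hy, hxy⟩
        obtain ⟨j, hyj⟩ := Set.mem_iUnion.1 ((IH a (Order.lt_succ a)) ▸ hy)
        have hxj : x ∈ derivIter lt' (Ti j) a := hQ j a x hx y hyj hxy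
        refine Set.mem_iUnion.2 ⟨j, ?_⟩
        rw [MNP.derivIter_succ]
        exact ⟨hxj, y, hyj, hxy⟩
      · intro x hx
        by_contra hcon
        rw [Set.mem_iUnion] at hcon
        push_neg at hcon
        have h1 : ∀ i : Fin n, ∃ γ' , γ' < γ ∧ x ∉ derivIter lt' (Ti i) γ' := by
          intro i
          by_contra h
          push_neg at h
          exact hcon i (by
            rw [MNP.derivIter_limit _ hlim]
            exact Set.mem_iInter₂.2 fun o' ho' => h o' ho')
        choose γf hγf1 hγf2 using h1
        set γs := Finset.univ.sup' Finset.univ_nonempty γf with hγs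
        have hγsγ : γs < γ := (Finset.sup'_lt_iff Finset.univ_nonempty).2 fun i _ => hγf1 i
        have hxγs : x ∈ derivIter lt' T γs := by
          rw [MNP.derivIter_limit _ hlim] at hx
          exact Set.mem_iInter₂.1 hx γs hγsγ
        obtain ⟨j, hxj⟩ := Set.mem_iUnion.1 ((IH γs hγsγ) ▸ hxγs)
        exact hγf2 j (MNP.derivIter_anti (Ti j) γs (γf j)
          (Finset.le_sup' γf (Finset.mem_univ j)) hxj)
  -- conclude
  set E : Set Ordinal := {o | derivIter lt' T o = ∅} with hE
  set Ei : Fin n → Set Ordinal := fun i => {o | derivIter lt' (Ti i) o = ∅} with hEi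
  have hEeq : ∀ γ, γ ∈ E ↔ ∀ i, γ ∈ Ei i := by
    intro γ
    constructor
    · intro h i
      have h2 : ⋃ i, derivIter lt' (Ti i) γ = (∅ : Set σ) := (hP γ).symm.trans h
      exact Set.iUnion_eq_empty.1 h2 i
    · intro h
      show derivIter lt' T γ = ∅
      rw [hP γ]
      exact Set.iUnion_eq_empty.2 h
  have hoT : sInf E = α := ho
  rcases Set.eq_empty_or_nonempty E with hEemp | hEne
  · -- E empty : α = 0 and some Ei is empty
    have hα0 : α = 0 := by rw [← hoT, hEemp, Ordinal.sInf_empty]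
    have : ∃ i, Ei i = ∅ := by
      by_contra h
      push_neg at h
      choose γf hγf using h
      set γs := Finset.univ.sup' Finset.univ_nonempty γf with hγs
      have : γs ∈ E := by
        rw [hEeq]
        intro i
        have : derivIter lt' (Ti i) γs ⊆ derivIter lt' (Ti i) (γf i) :=
          MNP.derivIter_anti (Ti i) γs (γf i) (Finset.le_sup' γf (Finset.mem_univ i))
        have h2 := hγf i
        exact Set.subset_empty_iff.1 (h2 ▸ this)
      rw [hEemp] at this
      exact this
    obtain ⟨i, hi⟩ := this
    refine ⟨i, ?_⟩
    show sInf (Ei i) = α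
    rw [hi, Ordinal.sInf_empty, hα0]
  · -- E nonempty
    have hαE : α ∈ E := hoT ▸ csInf_mem hEne
    have hαEi : ∀ i, α ∈ Ei i := (hEeq α).1 hαE
    set β : Fin n → Ordinal := fun i => sInf (Ei i) with hβ
    have hβle : ∀ i, β i ≤ α := fun i => csInf_le' (hαEi i)
    obtain ⟨j, hj⟩ := Finite.exists_max β
    have hβjE : β j ∈ E := by
      rw [hEeq]
      intro i
      have hmem : β i ∈ Ei i := csInf_mem ⟨α, hαEi i⟩
      have : derivIter lt' (Ti i) (β j) ⊆ derivIter lt' (Ti i) (β i) :=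
        MNP.derivIter_anti (Ti i) (β j) (β i) (hj i)
      exact Set.subset_empty_iff.1 (hmem ▸ this)
    have : α ≤ β j := hoT ▸ csInf_le' hβjE
    exact ⟨j, le_antisymm (hβle j) this⟩
end

section
/- Let (xₙ) be a normalized basic sequence in a Banach space which has an ℓ₁-S₂-spreading model with constant K ≥ 1, i.e. for every F ∈ S₂ the finite sequence (x_i)_{i∈F} is K-equivalent to the unit vector basis of ℓ₁^{|F|}. Then there exists a normalized block basis (yₙ) of (xₙ) having an ℓ₁-S₁-spreading model with constant √K, i.e. for every F ∈ S₁ the sequence (y_i)_{i∈F} is √K-equivalent to the unit vector basis of ℓ₁^{|F|}. -/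
universe u v

open Ordinal

section Helpers

variable {X : Type u} [NormedAddCommGroup X] [NormedSpace ℝ X]

/-- Shifting a set in `S₁` keeps it in `S₁`. -/
lemma inS1_image_add {F : Finset ℕ} (hF : InS1 F) (t : ℕ) :
    InS1 (F.image (· + t)) := by
  intro m hm
  obtain ⟨a, ha, rfl⟩ := Finset.mem_image.mp hm
  have hc : (F.image (· + t)).card = F.card :=
    Finset.card_image_of_injective _ (add_left_injective t)
  rw [hc]
  exact le_trans (hF a ha) (Nat.le_add_right a t)

/-- A nonempty set in `S₁` belongs to `S₂`. -/
lemma inS2_of_inS1 {F : Finset ℕ} (hF : InS1 F) : InS2 F := by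
  rcases F.eq_empty_or_nonempty with rfl | hne
  · exact Or.inl rfl
  · right
    refine ⟨1, one_pos, fun _ => F, fun _ => F.min' hne, fun _ => hF, ?_, ?_, ?_, ?_, ?_, ?_⟩
    · intro i j hij; omega
    · intro i j hij; exact absurd hij (by omega)
    · intro m hm
      simp only [Finset.mem_image] at hm
      obtain ⟨i, _, rfl⟩ := hm
      calc (Finset.image (fun _ : Fin 1 => F.min' hne) Finset.univ).card
          ≤ 1 := le_trans Finset.card_image_le (by simp)
        _ ≤ F.card := Finset.card_pos.mpr hne
        _ ≤ F.min' hne := hF _ (F.min'_mem hne)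
    · intro i a ha; exact F.min'_le a ha
    · intro i j hij; exact absurd hij (by omega)
    · ext a; simp

/-- Union of an `S₁`-admissible family of `S₁` sets lies in `S₂`. -/
lemma inS2_biUnion {F : Finset ℕ} (hF : InS1 F) (hFne : F.Nonempty)
    (E : ℕ → Finset ℕ) (hEne : ∀ n ∈ F, (E n).Nonempty)
    (hE1 : ∀ n ∈ F, InS1 (E n))
    (hgt : ∀ n ∈ F, ∀ i ∈ E n, n < i)
    (hsucc : ∀ n ∈ F, ∀ m ∈ F, n < m → ∀ i ∈ E n, ∀ j ∈ E m, i < j) :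
    InS2 (F.biUnion E) := by
  right
  set k := F.card with hk
  have hkpos : 0 < k := Finset.card_pos.mpr hFne
  set e : Fin k → ℕ := fun i => (F.orderIsoOfFin rfl i : ℕ) with he
  have heF : ∀ i, e i ∈ F := fun i => (F.orderIsoOfFin rfl i).2
  have hemono : StrictMono e := fun i j hij =>
    Subtype.coe_lt_coe.mpr ((F.orderIsoOfFin rfl).strictMono hij)
  have hesurj : ∀ n ∈ F, ∃ i, e i = n := by
    intro n hn
    obtain ⟨i, hi⟩ := (F.orderIsoOfFin rfl).surjective ⟨n, hn⟩
    exact ⟨i, congrArg Subtype.val hi⟩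
  refine ⟨k, hkpos, fun i => E (e i), fun i => (E (e i)).min' (hEne _ (heF i)),
    fun i => hE1 _ (heF i), ?_, ?_, ?_, ?_, ?_, ?_⟩
  · intro i j hij a ha b hb
    exact hsucc _ (heF i) _ (heF j) (hemono hij) a ha b hb
  · intro i j hij
    have h1 := (E (e i)).min'_mem (hEne _ (heF i))
    have h2 := (E (e j)).min'_mem (hEne _ (heF j))
    exact hsucc _ (heF i) _ (heF j) (hemono hij) _ h1 _ h2
  · intro m hm
    simp only [Finset.mem_image] at hm
    obtain ⟨i, _, rfl⟩ := hm
    have h1 : k ≤ e i := by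
      have h0 : F.min' hFne ≤ e i := F.min'_le _ (heF i)
      have h2 : k ≤ F.min' hFne := hF _ (F.min'_mem hFne)
      omega
    have h3 : e i < (E (e i)).min' (hEne _ (heF i)) :=
      hgt _ (heF i) _ ((E (e i)).min'_mem (hEne _ (heF i)))
    calc (Finset.image _ Finset.univ).card ≤ k := le_trans Finset.card_image_le (by simp)
      _ ≤ (E (e i)).min' (hEne _ (heF i)) := by omega
  · intro i a ha; exact (E (e i)).min'_le a ha
  · intro i j hij a ha
    have h2 := (E (e j)).min'_mem (hEne _ (heF j))
    exact hsucc _ (heF i) _ (heF j) (hemono hij) a ha _ h2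
  · ext a
    simp only [Finset.mem_biUnion, Finset.mem_univ, true_and]
    constructor
    · rintro ⟨n, hn, han⟩
      obtain ⟨i, rfl⟩ := hesurj n hn
      exact ⟨i, han⟩
    · rintro ⟨i, hi⟩
      exact ⟨e i, heF i, hi⟩

/-- Uniform upper bound: `‖∑ aᵢxᵢ‖ ≤ ∑ |aᵢ|` for norm-one vectors. -/
lemma norm_sum_le_abs {x : ℕ → X} (hx : ∀ n, ‖x n‖ = 1)
    (F : Finset ℕ) (a : ℕ → ℝ) :
    ‖∑ i ∈ F, a i • x i‖ ≤ ∑ i ∈ F, |a i| := by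
  refine le_trans (norm_sum_le _ _) (le_of_eq ?_)
  refine Finset.sum_congr rfl fun i _ => ?_
  rw [norm_smul, hx i, mul_one, Real.norm_eq_abs]

/-- Uniform lower bound `K⁻¹ ∑|aᵢ| ≤ ‖∑ aᵢxᵢ‖` on sets of `S₂`. -/
lemma lower_bound_S2 {x : ℕ → X} (hx : ∀ n, ‖x n‖ = 1) {K : ℝ} (hK : 1 ≤ K)
    (hSM : ∀ F : Finset ℕ, InS2 F → L1EquivOn K x F)
    {F : Finset ℕ} (hF : InS2 F) (a : ℕ → ℝ) :
    K⁻¹ * ∑ i ∈ F, |a i| ≤ ‖∑ i ∈ F, a i • x i‖ := by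
  rcases F.eq_empty_or_nonempty with rfl | hne
  · simp
  obtain ⟨c, C, hc, hC, hCc, h⟩ := hSM F hF
  obtain ⟨i0, hi0⟩ := hne
  have hC1 : 1 ≤ C := by
    have := (h (fun j => if j = i0 then 1 else 0)).2
    simp only [ite_smul, one_smul, zero_smul, apply_ite abs, abs_one, abs_zero] at this
    rw [Finset.sum_ite_eq' F i0 (fun j => x j), Finset.sum_ite_eq' F i0 (fun _ => (1:ℝ))] at this
    simp only [hi0, if_true, mul_one, hx i0] at this
    exact this
  have hKc : K⁻¹ ≤ c := by
    have hK0 : (0:ℝ) < K := lt_of_lt_of_le one_pos hK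
    rw [div_le_iff₀ hc] at hCc
    have h1 : 1 ≤ K * c := le_trans hC1 hCc
    have h2 : K⁻¹ * 1 ≤ K⁻¹ * (K * c) :=
      mul_le_mul_of_nonneg_left h1 (inv_nonneg.mpr hK0.le)
    rwa [mul_one, ← mul_assoc, inv_mul_cancel₀ hK0.ne', one_mul] at h2
  calc K⁻¹ * ∑ i ∈ F, |a i| ≤ c * ∑ i ∈ F, |a i| := by
        apply mul_le_mul_of_nonneg_right hKc
        exact Finset.sum_nonneg fun i _ => abs_nonneg _
    _ ≤ _ := (h a).1

end Helpers

/-- **Lemma.** If a normalized basic sequence `(xₙ)` has an ℓ₁-`S₂`-spreading model with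
constant `K`, then some normalized block basis `(yₙ)` of `(xₙ)` has an
ℓ₁-`S₁`-spreading model with constant `√K`. -/
theorem spreading_model_refinement (X : Type u) [NormedAddCommGroup X]
    [NormedSpace ℝ X] [CompleteSpace X]
    (x : ℕ → X) (hx : IsNormalizedBasic x) (K : ℝ) (hK : 1 ≤ K)
    (hSM : ∀ F : Finset ℕ, InS2 F → L1EquivOn K x F) :
    ∃ (y : ℕ → X) (E : ℕ → Finset ℕ) (a : ℕ → ℝ),
      (∀ n, (E n).Nonempty) ∧
      (∀ n : ℕ, ∀ i ∈ E n, ∀ j ∈ E (n + 1), i < j) ∧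
      (∀ n, y n = ∑ i ∈ E n, a i • x i) ∧
      (∀ n, ‖y n‖ = 1) ∧
      ∀ F : Finset ℕ, InS1 F → L1EquivOn (Real.sqrt K) y F := by
  classical
  obtain ⟨hx1, -⟩ := hx
  have hK0 : (0:ℝ) < K := lt_of_lt_of_le one_pos hK
  have hsK : (0:ℝ) < Real.sqrt K := Real.sqrt_pos.mpr hK0
  have hsqmul : Real.sqrt K * Real.sqrt K = K := Real.mul_self_sqrt hK0.le
  have hKsK : K⁻¹ * Real.sqrt K = (Real.sqrt K)⁻¹ := by
    have h1 : K ≠ 0 := hK0.ne'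
    have h2 : Real.sqrt K ≠ 0 := hsK.ne'
    field_simp
    exact Real.sq_sqrt hK0.le
  have hratio : (1:ℝ) / (Real.sqrt K)⁻¹ ≤ Real.sqrt K := by
    rw [one_div, inv_inv]
  by_cases hQ : ∀ N : ℕ, ∃ (F : Finset ℕ) (a : ℕ → ℝ), F.Nonempty ∧ InS1 F ∧
      (∀ i ∈ F, N < i) ∧ ‖∑ i ∈ F, a i • x i‖ = 1 ∧ Real.sqrt K ≤ ∑ i ∈ F, |a i|
  · -- Case Q: there are arbitrarily far out normalized S₁-combinations with mass ≥ √K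
    choose Fc ac hcne hcS1 hcgt hcnorm hcsum using hQ
    set Nfun : ℕ → ℕ := fun n => Nat.rec 0 (fun m N => max (m+1) ((Fc N).sup id)) n
      with hNfun
    set E : ℕ → Finset ℕ := fun n => Fc (Nfun n) with hE
    set acoef : ℕ → ℕ → ℝ := fun n => ac (Nfun n) with hacoef
    have hEne : ∀ n, (E n).Nonempty := fun n => hcne _
    have hES1 : ∀ n, InS1 (E n) := fun n => hcS1 _
    have hNge : ∀ n, n ≤ Nfun n := by
      intro n
      cases n with
      | zero => exact le_refl _
      | succ m => exact le_max_left _ _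
    have hEgt : ∀ n, ∀ i ∈ E n, n < i := by
      intro n i hi
      exact lt_of_le_of_lt (hNge n) (hcgt _ i hi)
    have hstep : ∀ n, ∀ i ∈ E n, ∀ j ∈ E (n+1), i < j := by
      intro n i hi j hj
      have h1 : i ≤ (E n).sup id := Finset.le_sup (f := id) hi
      have h2 : (Fc (Nfun n)).sup id ≤ Nfun (n+1) := le_max_right _ _
      have h3 : Nfun (n+1) < j := hcgt _ j hj
      calc i ≤ (E n).sup id := h1
        _ ≤ Nfun (n+1) := h2
        _ < j := h3
    have hmono : ∀ n m, n < m → ∀ i ∈ E n, ∀ j ∈ E m, i < j := by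
      intro n m
      induction m with
      | zero => omega
      | succ m ih =>
        intro h i hi j hj
        rcases Nat.lt_succ_iff_lt_or_eq.mp h with h' | h'
        · obtain ⟨t, ht⟩ := hEne m
          exact lt_trans (ih h' i hi t ht) (hstep m t ht j hj)
        · subst h'; exact hstep n i hi j hj
    have hdisj : ∀ n m, n ≠ m → ∀ i, i ∈ E n → i ∈ E m → False := by
      intro n m hnm i hin him
      rcases lt_or_gt_of_ne hnm with h | h
      · exact lt_irrefl i (hmono n m h i hin i him)
      · exact lt_irrefl i (hmono m n h i him i hin)
    set aglob : ℕ → ℝ := fun i => if h : ∃ n, i ∈ E n then acoef h.choose i else 0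
      with haglobdef
    have haglob : ∀ n, ∀ i ∈ E n, aglob i = acoef n i := by
      intro n i hi
      have hex : ∃ m, i ∈ E m := ⟨n, hi⟩
      have hch : hex.choose = n := by
        by_contra hne'
        exact hdisj _ _ hne' i hex.choose_spec hi
      rw [haglobdef]
      simp only [dif_pos hex]
      rw [hch]
    set y : ℕ → X := fun n => ∑ i ∈ E n, aglob i • x i with hy
    have hyval : ∀ n, y n = ∑ i ∈ E n, acoef n i • x i := by
      intro n
      exact Finset.sum_congr rfl fun i hi => by rw [haglob n i hi]
    have hy1 : ∀ n, ‖y n‖ = 1 := by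
      intro n; rw [hyval n]; exact hcnorm _
    have hymass : ∀ n, Real.sqrt K ≤ ∑ i ∈ E n, |aglob i| := by
      intro n
      refine le_trans (hcsum (Nfun n)) (le_of_eq ?_)
      exact Finset.sum_congr rfl fun i hi => by rw [haglob n i hi]
    refine ⟨y, E, aglob, hEne, hstep, fun n => rfl, hy1, ?_⟩
    intro F hF
    refine ⟨(Real.sqrt K)⁻¹, 1, inv_pos.mpr hsK, one_pos, hratio, ?_⟩
    intro b
    constructor
    · -- lower bound
      rcases F.eq_empty_or_nonempty with rfl | hFne
      · simp
      have hdisj' : (F : Set ℕ).PairwiseDisjoint E := by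
        intro n hn m hm hnm
        exact Finset.disjoint_left.mpr fun i hin him => hdisj n m hnm i hin him
      have hG : InS2 (F.biUnion E) :=
        inS2_biUnion hF hFne E (fun n _ => hEne n) (fun n _ => hES1 n)
          (fun n _ => hEgt n) (fun n _ m _ h => hmono n m h)
      set cfun : ℕ → ℝ := fun i => (∑ n ∈ F, if i ∈ E n then b n else 0) * aglob i
        with hcdef
      have hcfun : ∀ n ∈ F, ∀ i ∈ E n, cfun i = b n * aglob i := by
        intro n hn i hi
        have hsum : (∑ m ∈ F, if i ∈ E m then b m else 0) = b n := by
          rw [Finset.sum_eq_single n]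
          · rw [if_pos hi]
          · intro m hm hmn
            rw [if_neg]
            intro him
            exact hdisj m n hmn i him hi
          · intro hn'; exact absurd hn hn'
        rw [hcdef]
        simp only
        rw [hsum]
      have hrw : ∑ n ∈ F, b n • y n = ∑ i ∈ F.biUnion E, cfun i • x i := by
        rw [Finset.sum_biUnion hdisj']
        refine Finset.sum_congr rfl fun n hn => ?_
        rw [hy]
        simp only
        rw [Finset.smul_sum]
        refine Finset.sum_congr rfl fun i hi => ?_
        rw [hcfun n hn i hi, smul_smul]
      have habs : ∑ i ∈ F.biUnion E, |cfun i| = ∑ n ∈ F, |b n| * ∑ i ∈ E n, |aglob i| := by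
        rw [Finset.sum_biUnion hdisj']
        refine Finset.sum_congr rfl fun n hn => ?_
        rw [Finset.mul_sum]
        refine Finset.sum_congr rfl fun i hi => ?_
        rw [hcfun n hn i hi, abs_mul]
      calc (Real.sqrt K)⁻¹ * ∑ n ∈ F, |b n|
          = K⁻¹ * (Real.sqrt K * ∑ n ∈ F, |b n|) := by rw [← mul_assoc, hKsK]
        _ ≤ K⁻¹ * ∑ i ∈ F.biUnion E, |cfun i| := by
            refine mul_le_mul_of_nonneg_left ?_ (inv_nonneg.mpr hK0.le)
            rw [habs, Finset.mul_sum]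
            refine Finset.sum_le_sum fun n hn => ?_
            rw [mul_comm (Real.sqrt K) (|b n|)]
            exact mul_le_mul_of_nonneg_left (hymass n) (abs_nonneg _)
        _ ≤ ‖∑ i ∈ F.biUnion E, cfun i • x i‖ := lower_bound_S2 hx1 hK hSM hG cfun
        _ = ‖∑ n ∈ F, b n • y n‖ := by rw [hrw]
    · rw [one_mul]
      exact norm_sum_le_abs hy1 F b
  · -- Case ¬Q: beyond some N all S₁-combinations are already √K-good
    push_neg at hQ
    obtain ⟨N, hN⟩ := hQ
    have key : ∀ (F : Finset ℕ), InS1 F → (∀ i ∈ F, N < i) → ∀ c : ℕ → ℝ,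
        (Real.sqrt K)⁻¹ * ∑ i ∈ F, |c i| ≤ ‖∑ i ∈ F, c i • x i‖ := by
      intro F hF hFN c
      rcases F.eq_empty_or_nonempty with rfl | hne
      · simp
      have hlow := lower_bound_S2 hx1 hK hSM (inS2_of_inS1 hF) c
      by_cases hz : ∑ i ∈ F, |c i| = 0
      · rw [hz, mul_zero]; exact norm_nonneg _
      have hpos : 0 < ∑ i ∈ F, |c i| :=
        lt_of_le_of_ne (Finset.sum_nonneg fun i _ => abs_nonneg _) (Ne.symm hz)
      set s := ‖∑ i ∈ F, c i • x i‖ with hs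
      have hs0 : 0 < s := lt_of_lt_of_le (by positivity) hlow
      have hnorm1 : ‖∑ i ∈ F, (c i / s) • x i‖ = 1 := by
        have hsc : ∑ i ∈ F, (c i / s) • x i = s⁻¹ • ∑ i ∈ F, c i • x i := by
          rw [Finset.smul_sum]
          refine Finset.sum_congr rfl fun i _ => ?_
          rw [smul_smul, div_eq_inv_mul]
        rw [hsc, norm_smul, norm_inv, Real.norm_eq_abs, abs_of_pos hs0, ← hs,
          inv_mul_cancel₀ hs0.ne']
      have hlt := hN F (fun i => c i / s) hne hF hFN hnorm1
      have hsum : ∑ i ∈ F, |c i / s| = (∑ i ∈ F, |c i|) / s := by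
        rw [Finset.sum_div]
        refine Finset.sum_congr rfl fun i _ => ?_
        rw [abs_div, abs_of_pos hs0]
      rw [hsum, div_lt_iff₀ hs0] at hlt
      calc (Real.sqrt K)⁻¹ * ∑ i ∈ F, |c i|
          ≤ (Real.sqrt K)⁻¹ * (Real.sqrt K * s) :=
            mul_le_mul_of_nonneg_left hlt.le (inv_nonneg.mpr hsK.le)
        _ = s := by rw [← mul_assoc, inv_mul_cancel₀ hsK.ne', one_mul]
    refine ⟨fun n => x (n + (N+1)), fun n => {n + (N+1)}, fun _ => 1, ?_, ?_, ?_, ?_, ?_⟩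
    · intro n; exact Finset.singleton_nonempty _
    · intro n i hi j hj
      simp only [Finset.mem_singleton] at hi hj
      omega
    · intro n; simp
    · intro n; exact hx1 _
    · intro F hF
      refine ⟨(Real.sqrt K)⁻¹, 1, inv_pos.mpr hsK, one_pos, hratio, ?_⟩
      intro b
      constructor
      · -- lower bound via shifted set
        have hinj : ∀ p ∈ F, ∀ q ∈ F, p + (N+1) = q + (N+1) → p = q := by
          intro p _ q _ h; omega
        have him1 : ∑ i ∈ F.image (· + (N+1)), |b (i - (N+1))| = ∑ n ∈ F, |b n| := by
          rw [Finset.sum_image hinj]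
          exact Finset.sum_congr rfl fun n _ => by rw [Nat.add_sub_cancel]
        have him2 : ∑ i ∈ F.image (· + (N+1)), (fun i => b (i - (N+1))) i • x i
            = ∑ n ∈ F, b n • x (n + (N+1)) := by
          rw [Finset.sum_image hinj]
          exact Finset.sum_congr rfl fun n _ => by simp
        have hk := key (F.image (· + (N+1))) (inS1_image_add hF (N+1))
          (by
            intro i hi
            obtain ⟨p, _, rfl⟩ := Finset.mem_image.mp hi
            omega)
          (fun i => b (i - (N+1)))
        rw [him1, him2] at hk
        exact hk
      · rw [one_mul]
        exact norm_sum_le_abs (fun n => hx1 (n + (N+1))) F b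
end
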